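/- arXiv:math/0505335 — 3 statements merged into one kernel-verified Lean document; each statement's English description precedes it below -/
import Mathlib

section
/- If G is a simple graph with all vertex degrees at most d, then the edges of G can be properly edge-colored with d+1 colors (i.e., there is a function from edges to a set of d+1 colors such that any two edges sharing a vertex receive different colors). -/
/-!
Add the edges one at a time. To color a new edge `s(x, y₀)`, take a maximal fan
`y₀, y₁, …, t` at `x`, in which the color of `s(x, yᵢ₊₁)` is missing at `yᵢ`; every vertex
misses some color because there are more colors than edges at it. If a color `β` missing at `t`
is also missing at `x`, rotating the fan (recoloring each `s(x, yᵢ)` with the old color of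
`s(x, yᵢ₊₁)` and `s(x, t)` with `β`) frees `s(x, y₀)`. Otherwise, by maximality, `β` sits on a
fan edge `s(x, u)`, and `β` is missing at the predecessor `w` of `u`. Let `α` be missing at `x`.
The `α`/`β`-edges form paths and cycles, and `x`, `w`, `t` are ends of paths, so `x` is not
joined to both `w` and `t`; interchanging `α` and `β` on the chain of `w` or of `t` that avoids
`x` makes `α` missing at the end of the fan up to `w`, or of the whole fan, which is then rotated.
Infinite graphs follow by compactness, applied to colorings of the line graph.
-/

namespace SimpleGraph

variable {V : Type*} {G : SimpleGraph V}

lemma eq_of_adj_of_encard_neighborSet_le_two {v u w₁ w₂ : V}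
    (hv : (G.neighborSet v).encard ≤ 2) (hu : G.Adj v u) (h₁ : G.Adj v w₁) (h₂ : G.Adj v w₂)
    (hw₁ : w₁ ≠ u) (hw₂ : w₂ ≠ u) : w₁ = w₂ := by
  by_contra hne
  have hsub : {u, w₁, w₂} ⊆ G.neighborSet v := by
    simp [Set.insert_subset_iff, hu, h₁, h₂]
  have h3 : ({u, w₁, w₂} : Set V).encard = 3 := by
    rw [Set.encard_insert_of_notMem (by simp [hw₁.symm, hw₂.symm]), Set.encard_pair hne]
    rfl
  exact absurd ((Set.encard_le_encard hsub).trans hv) (by rw [h3]; decide)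

lemma Walk.IsPath.getVert_eq_of_subsingleton_neighborSet
    (hG : ∀ v, (G.neighborSet v).encard ≤ 2) {a b b' : V} (ha : (G.neighborSet a).Subsingleton)
    {p : G.Walk a b} {q : G.Walk a b'} (hp : p.IsPath) (hq : q.IsPath) :
    ∀ i, i ≤ p.length → i ≤ q.length → p.getVert i = q.getVert i := by
  intro i
  induction i using Nat.strong_induction_on with
  | _ i ih =>
  intro hip hiq
  match i, ih with
  | 0, _ => simp
  | 1, _ =>
    exact ha (by simpa using p.adj_getVert_succ (i := 0) (by omega))
      (by simpa using q.adj_getVert_succ (i := 0) (by omega))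
  | j + 2, ih =>
    -- The next vertex is the neighbor of the current one other than the previous one.
    have hj₁ := ih (j + 1) (by omega) (by omega) (by omega)
    have hj := ih j (by omega) (by omega) (by omega)
    have hp₂ : p.getVert (j + 2) ≠ p.getVert j := fun h => by
      have := hp.getVert_injOn (by simp; omega) (by simp; omega) h
      omega
    have hq₂ : q.getVert (j + 2) ≠ q.getVert j := fun h => by
      have := hq.getVert_injOn (by simp; omega) (by simp; omega) h
      omega
    refine eq_of_adj_of_encard_neighborSet_le_two (hG (p.getVert (j + 1)))
      (p.adj_getVert_succ (i := j) (by omega)).symm (p.adj_getVert_succ (by omega)) ?_ hp₂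
      (hj ▸ hq₂)
    rw [hj₁]
    exact q.adj_getVert_succ (by omega)

lemma eq_of_reachable_of_subsingleton_neighborSet (hG : ∀ v, (G.neighborSet v).encard ≤ 2)
    {a b b' : V} (ha : (G.neighborSet a).Subsingleton) (hb : (G.neighborSet b).Subsingleton)
    (hb' : (G.neighborSet b').Subsingleton) (hab : a ≠ b) (hab' : a ≠ b')
    (h : G.Reachable a b) (h' : G.Reachable a b') : b = b' := by
  obtain ⟨p, hp⟩ := h.exists_isPath
  obtain ⟨q, hq⟩ := h'.exists_isPath
  wlog hle : p.length ≤ q.length generalizing b b'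
  · exact (this hb' hb hab' hab h' h q hq p hp (by omega)).symm
  by_contra hne
  have hbq : b ∈ q.support := by
    rw [← p.getVert_length, hp.getVert_eq_of_subsingleton_neighborSet hG ha hq _ le_rfl hle]
    exact q.getVert_mem_support _
  exact hq.isTrail.not_mem_support_of_subsingleton_neighborSet (Ne.symm hab) hne hb hbq

end SimpleGraph

namespace EdgeColoring

open Finset SimpleGraph

variable {V C : Type*}

def IsProperOn (c : Sym2 V → C) (S : Finset (Sym2 V)) : Prop :=
  ∀ e ∈ S, ∀ f ∈ S, e ≠ f → (∃ v, v ∈ e ∧ v ∈ f) → c e ≠ c f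

def IsMissing (c : Sym2 V → C) (S : Finset (Sym2 V)) (v : V) (γ : C) : Prop :=
  ∀ f ∈ S, v ∈ f → c f ≠ γ

variable {c : Sym2 V → C} {S : Finset (Sym2 V)} {x y a b v : V} {γ δ : C}

lemma exists_isMissing [DecidableEq V] [Fintype C] (c : Sym2 V → C)
    (hv : #{f ∈ S | v ∈ f} < Fintype.card C) : ∃ γ, IsMissing c S v γ := by
  classical
  obtain ⟨γ, -, hγ⟩ := exists_mem_notMem_of_card_lt_card
    (s := image c {f ∈ S | v ∈ f}) (t := univ) (card_image_le.trans_lt hv)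
  exact ⟨γ, fun f hf hvf hfγ => hγ (mem_image.2 ⟨f, mem_filter.2 ⟨hf, hvf⟩, hfγ⟩)⟩

lemma IsProperOn.eq_of_apply_eq (hc : IsProperOn c S) (ha : s(x, a) ∈ S) (hb : s(x, b) ∈ S)
    (hab : c s(x, a) = c s(x, b)) : a = b := by
  by_contra hne
  exact hc _ ha _ hb (Sym2.congr_right.not.2 hne) ⟨x, Sym2.mem_mk_left _ _, Sym2.mem_mk_left _ _⟩
    hab

lemma IsProperOn.update_insert [DecidableEq V] (hc : IsProperOn c S) (hx : IsMissing c S x γ)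
    (hy : IsMissing c S y γ) :
    IsProperOn (Function.update c s(x, y) γ) (insert s(x, y) S) := by
  have hnew : ∀ f ∈ insert s(x, y) S, f ≠ s(x, y) → ∀ v ∈ s(x, y), v ∈ f → c f ≠ γ := by
    intro f hf hne v hv hvf
    have hfS := (mem_insert.1 hf).resolve_left hne
    rcases Sym2.mem_iff.1 hv with rfl | rfl
    exacts [hx f hfS hvf, hy f hfS hvf]
  intro e he f hf hef ⟨v, hve, hvf⟩
  by_cases he' : e = s(x, y)
  · subst he'
    rw [Function.update_self, Function.update_of_ne (Ne.symm hef)]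
    exact (hnew f hf (Ne.symm hef) v hve hvf).symm
  by_cases hf' : f = s(x, y)
  · subst hf'
    rw [Function.update_self, Function.update_of_ne hef]
    exact hnew e he hef v hvf hve
  rw [Function.update_of_ne he', Function.update_of_ne hf']
  exact hc e ((mem_insert.1 he).resolve_left he') f ((mem_insert.1 hf).resolve_left hf') hef
    ⟨v, hve, hvf⟩

lemma IsProperOn.isMissing_update [DecidableEq V] (hc : IsProperOn c S) (hxy : s(x, y) ∈ S)
    (hy : IsMissing c S y γ) : IsMissing (Function.update c s(x, y) γ) S x (c s(x, y)) := by
  intro f hf hxf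
  by_cases hf' : f = s(x, y)
  · rw [hf', Function.update_self]
    exact (hy _ hxy (Sym2.mem_mk_right _ _)).symm
  · rw [Function.update_of_ne hf']
    exact hc f hf _ hxy hf' ⟨x, hxf, Sym2.mem_mk_left _ _⟩

lemma isMissing_update_iff [DecidableEq V] {g : Sym2 V} (hv : v ∉ g) :
    IsMissing (Function.update c g γ) S v δ ↔ IsMissing c S v δ := by
  refine forall₃_congr fun f _ hvf => ?_
  rw [Function.update_of_ne (by rintro rfl; exact hv hvf)]

section Kempe

def kempeGraph (c : Sym2 V → C) (S : Finset (Sym2 V)) (α β : C) : SimpleGraph V :=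
  fromEdgeSet {f | f ∈ S ∧ (c f = α ∨ c f = β)}

variable {α β : C}

lemma kempeGraph_adj : (kempeGraph c S α β).Adj v a ↔
    (s(v, a) ∈ S ∧ (c s(v, a) = α ∨ c s(v, a) = β)) ∧ v ≠ a := by
  simp [kempeGraph]

lemma encard_neighborSet_kempeGraph_le_two (hc : IsProperOn c S) (v : V) :
    ((kempeGraph c S α β).neighborSet v).encard ≤ 2 := by
  calc ((kempeGraph c S α β).neighborSet v).encard
      ≤ ({α, β} : Set C).encard :=
        Set.encard_le_encard_of_injOn (f := fun w => c s(v, w))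
          (fun w hw => (kempeGraph_adj.1 hw).1.2)
          (fun w₁ hw₁ w₂ hw₂ h => hc.eq_of_apply_eq (kempeGraph_adj.1 hw₁).1.1
            (kempeGraph_adj.1 hw₂).1.1 h)
    _ ≤ 2 := (Set.encard_insert_le _ _).trans (by rw [Set.encard_singleton]; rfl)

lemma subsingleton_neighborSet_kempeGraph (hc : IsProperOn c S) (hγ : γ = α ∨ γ = β)
    (hv : IsMissing c S v γ) : ((kempeGraph c S α β).neighborSet v).Subsingleton := by
  intro w₁ hw₁ w₂ hw₂
  obtain ⟨⟨hS₁, hc₁⟩, -⟩ := kempeGraph_adj.1 hw₁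
  obtain ⟨⟨hS₂, hc₂⟩, -⟩ := kempeGraph_adj.1 hw₂
  have h₁ := hv _ hS₁ (Sym2.mem_mk_left _ _)
  have h₂ := hv _ hS₂ (Sym2.mem_mk_left _ _)
  exact hc.eq_of_apply_eq hS₁ hS₂ (by grind)

variable [DecidableEq C]

open Classical in
/-- The Kempe interchange on the `α`/`β`-chain of `z`. Since `Equiv.swap α β` fixes all other
colors, it may be applied to every edge touching the chain. -/
noncomputable def kempeSwap (c : Sym2 V → C) (S : Finset (Sym2 V)) (α β : C) (z : V) :
    Sym2 V → C :=
  fun f => if ∃ v ∈ f, (kempeGraph c S α β).Reachable z v then Equiv.swap α β (c f) else c f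

variable {z : V} {f : Sym2 V}

lemma kempeSwap_of_reachable (hv : v ∈ f) (hz : (kempeGraph c S α β).Reachable z v) :
    kempeSwap c S α β z f = Equiv.swap α β (c f) :=
  if_pos ⟨v, hv, hz⟩

lemma kempeSwap_of_not_reachable (hf : f ∈ S) (hv : v ∈ f)
    (hz : ¬ (kempeGraph c S α β).Reachable z v) : kempeSwap c S α β z f = c f := by
  unfold kempeSwap
  split_ifs with h
  · obtain ⟨w, hw, hzw⟩ := h
    have hwv : w ≠ v := by rintro rfl; exact hz hzw
    have hcol : ¬ (c f = α ∨ c f = β) := fun hcol => by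
      obtain rfl := (Sym2.mem_and_mem_iff hwv).1 ⟨hw, hv⟩
      exact hz (hzw.trans (kempeGraph_adj.2 ⟨⟨hf, hcol⟩, hwv⟩).reachable)
    exact Equiv.swap_apply_of_ne_of_ne (fun h => hcol (.inl h)) (fun h => hcol (.inr h))
  · rfl

lemma IsProperOn.kempeSwap (hc : IsProperOn c S) : IsProperOn (kempeSwap c S α β z) S := by
  intro e he f hf hef ⟨v, hve, hvf⟩
  by_cases hz : (kempeGraph c S α β).Reachable z v
  · rw [kempeSwap_of_reachable hve hz, kempeSwap_of_reachable hvf hz]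
    exact (Equiv.injective _).ne (hc e he f hf hef ⟨v, hve, hvf⟩)
  · rw [kempeSwap_of_not_reachable he hve hz, kempeSwap_of_not_reachable hf hvf hz]
    exact hc e he f hf hef ⟨v, hve, hvf⟩

lemma isMissing_kempeSwap_iff_of_reachable (hz : (kempeGraph c S α β).Reachable z v) :
    IsMissing (kempeSwap c S α β z) S v γ ↔ IsMissing c S v (Equiv.swap α β γ) := by
  refine forall₃_congr fun f _ hvf => ?_
  rw [kempeSwap_of_reachable hvf hz, Ne, Equiv.swap_apply_eq_iff]

lemma isMissing_kempeSwap_iff_of_not_reachable (hz : ¬ (kempeGraph c S α β).Reachable z v) :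
    IsMissing (kempeSwap c S α β z) S v γ ↔ IsMissing c S v γ :=
  forall₃_congr fun _ hf hvf => by rw [kempeSwap_of_not_reachable hf hvf hz]

lemma isMissing_kempeSwap_iff_of_ne (hα : γ ≠ α) (hβ : γ ≠ β) :
    IsMissing (kempeSwap c S α β z) S v γ ↔ IsMissing c S v γ := by
  by_cases hz : (kempeGraph c S α β).Reachable z v
  · rw [isMissing_kempeSwap_iff_of_reachable hz, Equiv.swap_apply_of_ne_of_ne hα hβ]
  · exact isMissing_kempeSwap_iff_of_not_reachable hz

lemma isMissing_kempeSwap_self_iff :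
    IsMissing (kempeSwap c S α β z) S z α ↔ IsMissing c S z β := by
  rw [isMissing_kempeSwap_iff_of_reachable (.refl _), Equiv.swap_apply_left]

lemma isChain_kempeSwap {l : List V}
    (hl : l.IsChain fun a b => IsMissing c S a (c s(x, b)))
    (hx : ¬ (kempeGraph c S α β).Reachable z x) (hS : ∀ b ∈ l.tail, s(x, b) ∈ S)
    (hcol : ∀ b ∈ l.tail, c s(x, b) ≠ α ∧ c s(x, b) ≠ β) :
    l.IsChain fun a b => IsMissing (kempeSwap c S α β z) S a (kempeSwap c S α β z s(x, b)) :=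
  hl.imp_of_mem_tail_imp fun a b _ hb h => by
    rwa [kempeSwap_of_not_reachable (hS b hb) (Sym2.mem_mk_left _ _) hx,
      isMissing_kempeSwap_iff_of_ne (hcol b hb).1 (hcol b hb).2]

end Kempe

section Fan

/-- A Vizing fan at `x` around the uncolored edge `s(x, y₀)`. -/
structure IsFan (c : Sym2 V → C) (S : Finset (Sym2 V)) (x y₀ : V) (T : List V) : Prop where
  nodup : (x :: y₀ :: T).Nodup
  mem : ∀ b ∈ T, s(x, b) ∈ S
  isChain : (y₀ :: T).IsChain fun a b => IsMissing c S a (c s(x, b))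

variable {y₀ u : V} {P Q T : List V}

lemma IsFan.nil (hxy : x ≠ y₀) : IsFan c S x y₀ [] :=
  ⟨by simpa using hxy, by simp, .singleton _⟩

lemma IsFan.concat (hT : IsFan c S x y₀ T) (hu : u ∉ x :: y₀ :: T) (hxu : s(x, u) ∈ S)
    (hlast : IsMissing c S (T.getLastD y₀) (c s(x, u))) : IsFan c S x y₀ (T ++ [u]) where
  nodup := by
    rw [← List.cons_append, ← List.cons_append, List.nodup_append]
    exact ⟨hT.nodup, by simp, by grind⟩
  mem := by simpa [or_imp, forall_and] using ⟨hT.mem, hxu⟩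
  isChain := by
    rw [← List.cons_append, List.isChain_append]
    refine ⟨hT.isChain, .singleton _, ?_⟩
    simpa [List.getLast?_cons, List.getLastD_eq_getLast?] using hlast

lemma IsFan.of_append (hT : IsFan c S x y₀ (P ++ Q)) : IsFan c S x y₀ P where
  nodup := hT.nodup.sublist (by simp)
  mem b hb := hT.mem b (List.mem_append_left _ hb)
  isChain := (List.isChain_append.1 (by simpa using hT.isChain)).1

lemma IsFan.isMissing_of_append_cons (hT : IsFan c S x y₀ (P ++ u :: Q)) :
    IsMissing c S (P.getLastD y₀) (c s(x, u)) := by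
  have hchain := hT.isChain
  rw [← List.cons_append, List.isChain_append] at hchain
  simpa [List.getLast?_cons, List.getLastD_eq_getLast?] using hchain.2.2

lemma IsFan.length_le [DecidableEq V] (hT : IsFan c S x y₀ T) :
    T.length ≤ #{f ∈ S | x ∈ f} := by
  rw [← List.toFinset_card_of_nodup (List.nodup_cons.1 (List.nodup_cons.1 hT.nodup).2).2]
  refine card_le_card_of_injOn (fun b => s(x, b)) (fun b hb => ?_)
    (fun _ _ _ _ h => Sym2.congr_right.1 h)
  simpa using hT.mem b (List.mem_toFinset.1 hb)

lemma exists_maximal_isFan [DecidableEq V] (c : Sym2 V → C) (S : Finset (Sym2 V))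
    (hxy : x ≠ y₀) :
    ∃ T, IsFan c S x y₀ T ∧ ∀ T', IsFan c S x y₀ T' → T'.length ≤ T.length := by
  set lengths := {n | ∃ T, IsFan c S x y₀ T ∧ T.length = n}
  have hbdd : BddAbove lengths := ⟨_, fun _ ⟨_, hT, hn⟩ => hn ▸ hT.length_le⟩
  have hne : lengths.Nonempty := ⟨0, [], .nil hxy, rfl⟩
  obtain ⟨T, hT, hlen⟩ := Nat.sSup_mem hne hbdd
  exact ⟨T, hT, fun T' hT' => hlen ▸ le_csSup hbdd ⟨T', hT', rfl⟩⟩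

/-- Fan rotation: shift every color of the fan one step towards `s(x, y₀)`. -/
theorem IsFan.exists_isProperOn_insert_of_isMissing [DecidableEq V] (hT : IsFan c S x y₀ T)
    (hc : IsProperOn c S) (hx : IsMissing c S x γ) (hlast : IsMissing c S (T.getLastD y₀) γ) :
    ∃ c' : Sym2 V → C, IsProperOn c' (insert s(x, y₀) S) := by
  induction T using List.reverseRecOn generalizing c γ with
  | nil => exact ⟨_, hc.update_insert hx hlast⟩
  | append_singleton M t ih =>
    rw [List.getLastD_concat] at hlast
    have hxt : s(x, t) ∈ S := hT.mem t (by simp)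
    have hnodup := hT.nodup
    rw [← List.cons_append, ← List.cons_append, List.nodup_append] at hnodup
    have hoff : ∀ a ∈ y₀ :: M, a ∉ s(x, t) := by
      intro a ha hat
      rcases Sym2.mem_iff.1 hat with rfl | rfl
      · exact (List.nodup_cons.1 hnodup.1).1 ha
      · exact hnodup.2.2 _ (List.mem_cons_of_mem _ ha) _ (List.mem_singleton_self _) rfl
    have hM : IsFan c S x y₀ M := hT.of_append
    have hfan : IsFan (Function.update c s(x, t) γ) S x y₀ M := by
      refine ⟨hM.nodup, hM.mem, hM.isChain.imp_of_mem_tail_imp fun a b ha hb h => ?_⟩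
      have hbt : s(x, b) ≠ s(x, t) := fun h => hoff b (List.mem_of_mem_tail hb) (h ▸ by simp)
      rwa [Function.update_of_ne hbt, isMissing_update_iff (hoff a ha)]
    exact ih hfan (by simpa [insert_eq_of_mem hxt] using hc.update_insert hx hlast)
      (hc.isMissing_update hxt hlast)
      ((isMissing_update_iff (hoff _ List.getLastD_mem_cons)).2 hT.isMissing_of_append_cons)

end Fan

section KempeFan

variable [DecidableEq C] {α β : C} {z : V}

lemma IsFan.kempeSwap_of_ne (hT : IsFan c S x y₀ T) (hx : ¬ (kempeGraph c S α β).Reachable z x)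
    (hcol : ∀ b ∈ T, c s(x, b) ≠ α ∧ c s(x, b) ≠ β) : IsFan (kempeSwap c S α β z) S x y₀ T :=
  ⟨hT.nodup, hT.mem, isChain_kempeSwap hT.isChain hx hT.mem hcol⟩

lemma IsFan.kempeSwap_of_append_cons (hT : IsFan c S x y₀ (P ++ u :: Q))
    (hx : ¬ (kempeGraph c S α β).Reachable z x)
    (hw : ¬ (kempeGraph c S α β).Reachable z (P.getLastD y₀))
    (hcol : ∀ b ∈ P ++ Q, c s(x, b) ≠ α ∧ c s(x, b) ≠ β) :
    IsFan (kempeSwap c S α β z) S x y₀ (P ++ u :: Q) := by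
  refine ⟨hT.nodup, hT.mem, ?_⟩
  have hchainQ := (List.isChain_append.1 (List.cons_append .. ▸ hT.isChain)).2.1
  rw [← List.cons_append, List.isChain_append]
  refine ⟨(hT.of_append.kempeSwap_of_ne hx fun b hb =>
      hcol b (List.mem_append_left _ hb)).isChain,
    isChain_kempeSwap hchainQ hx (fun b hb => hT.mem b (by simp [show b ∈ Q from hb]))
      (fun b hb => hcol b (by simp [show b ∈ Q from hb])), ?_⟩
  simp only [List.getLast?_cons, List.head?_cons, Option.mem_some_iff, forall_eq']
  rw [kempeSwap_of_not_reachable (hT.mem u (by simp)) (Sym2.mem_mk_left _ _) hx,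
    ← List.getLastD_eq_getLast?, isMissing_kempeSwap_iff_of_not_reachable hw]
  exact hT.isMissing_of_append_cons

end KempeFan

theorem IsFan.exists_isProperOn_insert_of_mem [DecidableEq V] {α β : C} (hT : IsFan c S x y₀ T)
    (hc : IsProperOn c S) (hα : IsMissing c S x α) (hβ : IsMissing c S (T.getLastD y₀) β)
    (hu : u ∈ T) (hcu : c s(x, u) = β) :
    ∃ c' : Sym2 V → C, IsProperOn c' (insert s(x, y₀) S) := by
  classical
  obtain ⟨P, Q, rfl⟩ := List.append_of_mem hu
  set w := P.getLastD y₀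
  set t := (P ++ u :: Q).getLastD y₀
  have hw : IsMissing c S w β := hcu ▸ hT.isMissing_of_append_cons
  have hPQ : ∀ b ∈ P ++ Q, b ∈ P ++ u :: Q :=
    ((List.sublist_cons_self u Q).append_left P).subset
  have hcol : ∀ b ∈ P ++ Q, c s(x, b) ≠ α ∧ c s(x, b) ≠ β := fun b hb =>
    ⟨hα _ (hT.mem b (hPQ b hb)) (Sym2.mem_mk_left _ _), fun h =>
      (List.nodup_middle.1 (List.nodup_cons.1 (List.nodup_cons.1 hT.nodup).2).2).notMem
        (hc.eq_of_apply_eq (hT.mem b (hPQ b hb)) (hT.mem u hu) (h.trans hcu.symm) ▸ hb)⟩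
  have hnodup := hT.nodup
  rw [← List.cons_append, ← List.cons_append, List.nodup_append] at hnodup
  have ht : t ∈ u :: Q := by
    have : t = Q.getLastD u := by simp [t, List.getLast?_cons, List.getLastD_eq_getLast?]
    exact this ▸ List.getLastD_mem_cons
  have hxw : x ≠ w := fun h => (List.nodup_cons.1 hnodup.1).1 (h ▸ List.getLastD_mem_cons)
  have hxt : x ≠ t := hnodup.2.2 x (by simp) t ht
  have hwt : w ≠ t := hnodup.2.2 w (List.mem_cons_of_mem _ List.getLastD_mem_cons) t ht
  by_cases hwx : (kempeGraph c S α β).Reachable w x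
  · -- `x` and `w` end the same `α`/`β`-path, so the chain of `t` avoids both.
    have htx : ¬ (kempeGraph c S α β).Reachable t x := fun htx =>
      hwt (eq_of_reachable_of_subsingleton_neighborSet (encard_neighborSet_kempeGraph_le_two hc)
        (subsingleton_neighborSet_kempeGraph hc (.inl rfl) hα)
        (subsingleton_neighborSet_kempeGraph hc (.inr rfl) hw)
        (subsingleton_neighborSet_kempeGraph hc (.inr rfl) hβ) hxw hxt hwx.symm htx.symm)
    have htw : ¬ (kempeGraph c S α β).Reachable t w := fun htw => htx (htw.trans hwx)
    exact (hT.kempeSwap_of_append_cons htx htw hcol).exists_isProperOn_insert_of_isMissing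
      hc.kempeSwap ((isMissing_kempeSwap_iff_of_not_reachable htx).2 hα)
      (isMissing_kempeSwap_self_iff.2 hβ)
  · exact (hT.of_append.kempeSwap_of_ne hwx fun b hb => hcol b (List.mem_append_left _ hb)
      ).exists_isProperOn_insert_of_isMissing hc.kempeSwap
      ((isMissing_kempeSwap_iff_of_not_reachable hwx).2 hα) (isMissing_kempeSwap_self_iff.2 hw)

section Extension

variable [DecidableEq V] [Fintype C]

theorem exists_isProperOn_insert {y₀ : V} (hS : ∀ f ∈ S, ¬ f.IsDiag)
    (hdeg : ∀ v, #{f ∈ S | v ∈ f} < Fintype.card C) (hxy : x ≠ y₀) (he : s(x, y₀) ∉ S)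
    (hc : IsProperOn c S) : ∃ c' : Sym2 V → C, IsProperOn c' (insert s(x, y₀) S) := by
  obtain ⟨T, hT, hmax⟩ := exists_maximal_isFan c S hxy
  obtain ⟨α, hα⟩ := exists_isMissing c (hdeg x)
  obtain ⟨β, hβ⟩ := exists_isMissing c (hdeg (T.getLastD y₀))
  by_cases hβx : IsMissing c S x β
  · exact hT.exists_isProperOn_insert_of_isMissing hc hβx hβ
  obtain ⟨f, hf, hxf, hcf⟩ : ∃ f ∈ S, x ∈ f ∧ c f = β := by simpa [IsMissing] using hβx
  obtain ⟨u, rfl⟩ := Sym2.mem_iff_exists.1 hxf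
  refine hT.exists_isProperOn_insert_of_mem hc hα hβ ?_ hcf
  by_contra huT
  have hu : u ∉ x :: y₀ :: T := by
    simp only [List.mem_cons, not_or]
    exact ⟨fun h => hS _ hf (h ▸ Sym2.mk_isDiag_iff.2 rfl), fun h => he (h ▸ hf), huT⟩
  simpa using hmax _ (hT.concat hu hf (hcf ▸ hβ))

theorem exists_isProperOn (S : Finset (Sym2 V)) (hS : ∀ f ∈ S, ¬ f.IsDiag)
    (hdeg : ∀ v, #{f ∈ S | v ∈ f} < Fintype.card C) : ∃ c : Sym2 V → C, IsProperOn c S := by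
  induction S using Finset.induction_on with
  | empty =>
    exact ⟨fun e => (Fintype.card_pos_iff.1 ((Nat.zero_le _).trans_lt (hdeg e.out.1))).some,
      by simp [IsProperOn]⟩
  | insert e S he ih =>
    have hS' : ∀ f ∈ S, ¬ f.IsDiag := fun f hf => hS f (mem_insert_of_mem hf)
    have hdeg' : ∀ v, #{f ∈ S | v ∈ f} < Fintype.card C := fun v =>
      (card_le_card (filter_subset_filter _ (subset_insert _ _))).trans_lt (hdeg v)
    obtain ⟨c, hc⟩ := ih hS' hdeg'
    induction e using Sym2.ind with | _ x y => ?_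
    exact exists_isProperOn_insert hS' hdeg'
      (fun h => hS _ (mem_insert_self _ _) (Sym2.mk_isDiag_iff.2 h)) he hc

end Extension

end EdgeColoring

namespace SimpleGraph

open Finset EdgeColoring

variable {V C : Type*} {G : SimpleGraph V}

lemma card_filter_mem_le_ncard_neighborSet [DecidableEq V] {S : Finset (Sym2 V)}
    (hS : ∀ f ∈ S, f ∈ G.edgeSet) {v : V} (hv : (G.neighborSet v).Finite) :
    #{f ∈ S | v ∈ f} ≤ (G.neighborSet v).ncard := by
  have := hv.fintype
  rw [Set.ncard_eq_toFinset_card', Set.toFinset_card, card_neighborSet_eq_degree,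
    ← card_incidenceFinset_eq_degree]
  refine card_le_card fun f hf => ?_
  rw [mem_filter] at hf
  exact (G.mem_incidenceFinset v f).2 ⟨hS f hf.1, hf.2⟩

lemma nonempty_coloring_of_subgraph_lineGraph [Fintype C] (hfin : ∀ v, (G.neighborSet v).Finite)
    (hdeg : ∀ v, (G.neighborSet v).ncard < Fintype.card C) (G' : G.lineGraph.Subgraph)
    (hG' : G'.verts.Finite) : Nonempty (G'.coe.Coloring C) := by
  classical
  set S := hG'.toFinset.image Subtype.val
  have hS : ∀ f ∈ S, f ∈ G.edgeSet := fun f hf => by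
    obtain ⟨e, -, rfl⟩ := mem_image.1 hf
    exact e.2
  obtain ⟨c, hc⟩ := exists_isProperOn S (fun f hf => G.not_isDiag_of_mem_edgeSet (hS f hf))
    fun v => (card_filter_mem_le_ncard_neighborSet hS (hfin v)).trans_lt (hdeg v)
  refine ⟨Coloring.mk (fun e => c e.1.1) fun {e f} hef => ?_⟩
  obtain ⟨hne, hshare⟩ := lineGraph_adj_iff_exists.1 (G'.adj_sub hef)
  exact hc _ (by simp [S, e.2]) _ (by simp [S, f.2]) (fun h => hne (Subtype.ext h)) hshare

end SimpleGraph

/-- **Vizing's theorem.** If `G` is a simple graph with all vertex degrees at most `d`,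
then the edges of `G` can be properly edge-colored with `d+1` colors: there is a function
from the edge set to `Fin (d+1)` such that any two distinct edges sharing a vertex
receive different colors. -/
theorem vizing_proper_edge_coloring (V : Type) (G : SimpleGraph V) (d : ℕ)
    (hfin : ∀ v, (G.neighborSet v).Finite)
    (hdeg : ∀ v, (G.neighborSet v).ncard ≤ d) :
    ∃ c : G.edgeSet → Fin (d + 1),
      ∀ e f : G.edgeSet, e ≠ f → (∃ v : V, v ∈ (e : Sym2 V) ∧ v ∈ (f : Sym2 V)) →
        c e ≠ c f := by
  obtain ⟨F⟩ := SimpleGraph.nonempty_hom_of_forall_finite_subgraph_hom fun G' hG' =>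
    (G.nonempty_coloring_of_subgraph_lineGraph (C := Fin (d + 1)) hfin
      (fun v => by simpa [Nat.lt_succ_iff] using hdeg v) G' hG').some
  exact ⟨F, fun e f hef hv => F.map_adj (SimpleGraph.lineGraph_adj_iff_exists.2 ⟨hef, hv⟩)⟩
end

section
/- T_a(M(A_r)) equals the disjoint union of the cylinder sets M(B_{r+1}) over all colored classes B_{r+1} such that B_{r+1} | A_r ∼ a. -/
/-- The space `X` of chains `A₀ ≺ A₁ ≺ ⋯`. -/
abbrev ChainSpace (W : ℕ → Type) (π : ∀ r, W (r + 1) → W r) : Type :=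
  {x : ∀ r, W r // ∀ r, π r (x (r + 1)) = x r}

/-- `T_a(M(A_r))` equals the disjoint union of the cylinder sets `M(B_{r+1})` over all
colored classes `B_{r+1}` with `B_{r+1} | A_r ∼ a`.  Here `u = u_a` encodes following the
`a`-colored edge at the root on classes, so `B | A ∼ a` means `u (r) B = A` (either the
root of `B` has no incident `a`-colored edge and its `r`-ball is `A`, or its `a`-colored
neighbor has `r`-ball of type `A`); `T = T_a` is the induced involution on chains. -/
theorem Ta_image_of_cylinder (W : ℕ → Type) (π : ∀ r, W (r + 1) → W r)
    (u : ∀ r, W (r + 1) → W r)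
    (hu1 : ∀ (r : ℕ) (A : W (r + 2)), π r (u (r + 1) A) = u r (π (r + 1) A))
    (hu2 : ∀ (r : ℕ) (A : W (r + 2)), u r (u (r + 1) A) = π r (π (r + 1) A))
    (T : ChainSpace W π → ChainSpace W π)
    (hT : ∀ (x : ChainSpace W π) (r : ℕ), (T x).1 r = u r (x.1 (r + 1)))
    (r : ℕ) (A : W r) :
    (T '' {x : ChainSpace W π | x.1 r = A} =
      ⋃ B ∈ {B : W (r + 1) | u r B = A}, {x : ChainSpace W π | x.1 (r + 1) = B}) ∧
    ({B : W (r + 1) | u r B = A}).PairwiseDisjoint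
      (fun B => {x : ChainSpace W π | x.1 (r + 1) = B}) := by
  have hTT : ∀ x : ChainSpace W π, T (T x) = x := by
    intro x
    apply Subtype.ext
    funext s
    rw [hT, hT, hu2, (x.2 (s+1)), x.2 s]
  constructor
  · ext y
    simp only [Set.mem_image, Set.mem_setOf_eq, Set.mem_iUnion, exists_prop]
    constructor
    · rintro ⟨x, hx, rfl⟩
      exact ⟨(T x).1 (r+1), by rw [hT, hu2, x.2 (r+1), x.2 r]; exact hx, rfl⟩
    · rintro ⟨B, hB, hy⟩
      refine ⟨T y, ?_, hTT y⟩
      rw [hT, hy]; exact hB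
  · intro B₁ h₁ B₂ h₂ hne
    refine Set.disjoint_left.2 fun x hx1 hx2 => hne ?_
    rw [← hx1, ← hx2]
end

section
/- Let x = (A_1 ≺ A_2 ≺ ⋯) be a chain and v the root of A_r. If two words of involutions of lengths s,t ≤ r satisfy T_{i_1}⋯T_{i_s}(v) ≠ T_{j_1}⋯T_{j_t}(v) in A_{2r}, then T_{i_1}⋯T_{i_s}(x) ≠ T_{j_1}⋯T_{j_t}(x) in X. -/
/-- The action of a word of involutions: `wordAct t [i₁, …, iₛ] v = T_{i₁} T_{i₂} ⋯ T_{iₛ} v`. -/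
def wordAct {α : Type} {S : Type} (t : S → α → α) (w : List S) (v : α) : α :=
  w.foldr (fun a p => t a p) v

/-- **Lemma 2.4.**  Let `x = (A₀ ≺ A₁ ≺ ⋯)` be a chain and `v` the root of `A_r`.  If two
words of involutions of lengths `s, t ≤ r` satisfy
`T_{i₁} ⋯ T_{iₛ}(v) ≠ T_{j₁} ⋯ T_{jₜ}(v)` (in `A_{2r}`), then
`T_{i₁} ⋯ T_{iₛ}(x) ≠ T_{j₁} ⋯ T_{jₜ}(x)` in `X`.

The classes are realized inside a colored graph with vertex set `V`, involutions `t a`,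
root `v0` and vertex colorings `col y i ∈ Q_i`; `cls y m ∈ 𝒲^m` is the class of the
colored `m`-ball around `y`, whose root color is recovered by `rootcol` (`hrc`).  The
hypothesis `hsep` is the separation property of the vertex coloring: two distinct
vertices at distance at most `2r` (in particular, two distinct endpoints of words of
length `≤ r` from `v0`) have different `Q_{2r}`-colors. -/
theorem word_ne_on_ball_implies_ne_on_chain (S : Type) (W : ℕ → Type)
    (π : ∀ r, W (r + 1) → W r)
    (u : S → ∀ r, W (r + 1) → W r)
    (T : S → ChainSpace W π → ChainSpace W π)
    (hT : ∀ (a : S) (x : ChainSpace W π) (r : ℕ), (T a x).1 r = u a r (x.1 (r + 1)))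
    (V : Type) (t : S → V → V) (ht : ∀ a, Function.Involutive (t a)) (v0 : V)
    (Q : ℕ → Type) (col : V → ∀ i, Q i)
    (cls : V → ∀ r, W r)
    (hloc : ∀ (a : S) (y : V) (r : ℕ), cls (t a y) r = u a r (cls y (r + 1)))
    (rootcol : ∀ m, W m → Q m) (hrc : ∀ (y : V) (m : ℕ), rootcol m (cls y m) = col y m)
    (x : ChainSpace W π) (hroot : ∀ r, x.1 r = cls v0 r)
    (r : ℕ) (w w' : List S) (hw : w.length ≤ r) (hw' : w'.length ≤ r)
    (hsep : ∀ w1 w2 : List S, w1.length ≤ r → w2.length ≤ r →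
      wordAct t w1 v0 ≠ wordAct t w2 v0 →
      col (wordAct t w1 v0) (2 * r) ≠ col (wordAct t w2 v0) (2 * r))
    (hv : wordAct t w v0 ≠ wordAct t w' v0) :
    wordAct (fun a => T a) w x ≠ wordAct (fun a => T a) w' x := by
  have key : ∀ (w : List S) (m : ℕ), (wordAct (fun a => T a) w x).1 m = cls (wordAct t w v0) m := by
    intro w
    induction w with
    | nil => intro m; simpa [wordAct] using hroot m
    | cons a w ih =>
        intro m
        show (T a (wordAct (fun a => T a) w x)).1 m = cls (t a (wordAct t w v0)) m
        rw [hT, ih, hloc]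
  intro h
  apply hsep w w' hw hw' hv
  have := congrArg (fun z : ChainSpace W π => rootcol (2*r) (z.1 (2*r))) h
  simpa [key, hrc] using this
end
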